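/- arXiv:0709.0447 — 5 statements merged into one kernel-verified Lean document; each statement's English description precedes it below -/
import Mathlib

section
/- There exist parameter values (λ₂, λ₃, λ₄) = (-0.01, 0, 0.003) such that g(x; μ, λ₂, λ₃, λ₄) = φ(x;μ)·{1 + λ₂(x-μ)²-λ₂ + λ₄((x-μ)⁴ - 6(x-μ)² + 3)} is strictly positive for all x ∈ ℝ, yet its variance 1 + 2λ₂ = 0.98 is strictly less than the variance 1 of the unmixed normal model. -/
/-!
Write `z = x - μ` and `t = z²`. As a polynomial in `t` the bracket is
`1.019 - 0.028 t + 0.003 t²`, whose discriminant is negative, so `g > 0`.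
For the variance, expand `z² · bracket` into the Gaussian moments `E z² = 1`, `E z⁴ = 3`,
`E z⁶ = 15`, which follow from the integration-by-parts recursion
`E z^(n+2) = (n + 1) E z^n`: then `E[z² H₂(z)] = 2` and `E[z² H₄(z)] = 0`,
so the variance is `1 + 2λ₂`.
-/

open MeasureTheory Real

section GaussianMoments

open scoped Nat

variable {b : ℝ} (hb : 0 < b)
include hb

theorem integrable_pow_mul_exp_neg_mul_sq (n : ℕ) :
    Integrable fun x : ℝ => x ^ n * exp (-b * x ^ 2) := by
  simpa using integrable_rpow_mul_exp_neg_mul_sq hb (s := n)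
    (by linarith [n.cast_nonneg (α := ℝ)])

theorem integral_pow_add_two_mul_exp_neg_mul_sq (n : ℕ) :
    ∫ x : ℝ, x ^ (n + 2) * exp (-b * x ^ 2)
      = (n + 1) / (2 * b) * ∫ x : ℝ, x ^ n * exp (-b * x ^ 2) := by
  have hderiv (x : ℝ) : HasDerivAt (fun x : ℝ => x ^ (n + 1) * exp (-b * x ^ 2))
      ((n + 1) * (x ^ n * exp (-b * x ^ 2)) - 2 * b * (x ^ (n + 2) * exp (-b * x ^ 2))) x := by
    refine ((hasDerivAt_pow (n + 1) x).mul
      ((hasDerivAt_pow 2 x).const_mul (-b)).exp).congr_deriv ?_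
    simp only [Nat.add_sub_cancel, Nat.cast_add, Nat.cast_one, Nat.cast_ofNat]
    ring
  have hint := ((integrable_pow_mul_exp_neg_mul_sq hb n).const_mul (n + 1)).sub
    ((integrable_pow_mul_exp_neg_mul_sq hb (n + 2)).const_mul (2 * b))
  have hzero := integral_eq_zero_of_hasDerivAt_of_integrable hderiv hint
    (integrable_pow_mul_exp_neg_mul_sq hb (n + 1))
  rw [integral_sub ((integrable_pow_mul_exp_neg_mul_sq hb n).const_mul _)
    ((integrable_pow_mul_exp_neg_mul_sq hb (n + 2)).const_mul _), integral_const_mul,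
    integral_const_mul] at hzero
  rw [div_mul_eq_mul_div, eq_div_iff (by positivity)]
  linarith

theorem integral_even_pow_mul_exp_neg_mul_sq (k : ℕ) :
    ∫ x : ℝ, x ^ (2 * k) * exp (-b * x ^ 2)
      = (2 * k - 1 : ℕ)‼ / (2 * b) ^ k * √(π / b) := by
  induction k with
  | zero => simpa using integral_gaussian b
  | succ k ih =>
    rw [mul_add_one, integral_pow_add_two_mul_exp_neg_mul_sq hb, ih]
    rcases k with _ | k
    · simp
    · rw [show 2 * (k + 1) + 2 - 1 = 2 * k + 1 + 2 by omega,
        show 2 * (k + 1) - 1 = 2 * k + 1 by omega,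
        Nat.doubleFactorial_add_two]
      push_cast [pow_succ]
      field_simp
      ring

end GaussianMoments

theorem local_mixture_factor_pos (z : ℝ) :
    0 < 1 + (-0.01) * (z ^ 2 - 1) + 0.003 * (z ^ 4 - 6 * z ^ 2 + 3) := by
  nlinarith [sq_nonneg (z ^ 2 - 14 / 3)]

theorem integral_sq_mul_local_mixture (l₂ l₄ : ℝ) :
    ∫ z : ℝ, z ^ 2 * (exp (-z ^ 2 / 2) / √(2 * π) *
      (1 + l₂ * (z ^ 2 - 1) + l₄ * (z ^ 4 - 6 * z ^ 2 + 3))) = 1 + 2 * l₂ := by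
  have hb : (0 : ℝ) < 1 / 2 := by norm_num
  set m : ℕ → ℝ → ℝ := fun n z => z ^ n * exp (-(1 / 2) * z ^ 2)
  have hm (n : ℕ) : Integrable (m n) := integrable_pow_mul_exp_neg_mul_sq hb n
  have moment (k : ℕ) : ∫ z, m (2 * k) z = (2 * k - 1).doubleFactorial * √(2 * π) := by
    simp only [m, integral_even_pow_mul_exp_neg_mul_sq hb]
    rw [show (2 : ℝ) * (1 / 2) = 1 by norm_num, one_pow, div_one,
      show π / (1 / 2) = 2 * π by ring]
  have expand : (fun z : ℝ => z ^ 2 * (exp (-z ^ 2 / 2) / √(2 * π) *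
      (1 + l₂ * (z ^ 2 - 1) + l₄ * (z ^ 4 - 6 * z ^ 2 + 3)))) = fun z => (√(2 * π))⁻¹ *
      ((1 - l₂ + 3 * l₄) * m 2 z + (l₂ - 6 * l₄) * m 4 z + l₄ * m 6 z) := by
    ext z
    simp only [m, neg_div, neg_mul, one_div, ← div_eq_inv_mul]
    ring
  rw [expand, integral_const_mul, integral_add (((hm 2).const_mul _).fun_add ((hm 4).const_mul _))
    ((hm 6).const_mul _), integral_add ((hm 2).const_mul _) ((hm 4).const_mul _),
    integral_const_mul, integral_const_mul, integral_const_mul, moment 1, moment 2, moment 3]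
  have : 0 < √(2 * π) := by positivity
  field_simp
  norm_num [Nat.doubleFactorial]
  ring

/-- With `(λ₂, λ₃, λ₄) = (-0.01, 0, 0.003)`, the order-4 local mixture of `N(μ,1)`,
`g(x) = φ(x;μ)·{1 + λ₂((x-μ)² - 1) + λ₄((x-μ)⁴ - 6(x-μ)² + 3)}`, is strictly
positive for all `x`, yet its variance `1 + 2λ₂ = 0.98` is strictly less than `1`. -/
theorem normal_local_mixture_reduced_variance
    (μ : ℝ) (φ : ℝ → ℝ → ℝ)
    (hφ : ∀ x m, φ x m = Real.exp (-(x - m)^2 / 2) / Real.sqrt (2 * Real.pi))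
    (l₂ l₄ : ℝ) (hl₂ : l₂ = -0.01) (hl₄ : l₄ = 0.003)
    (g : ℝ → ℝ)
    (hg : ∀ x, g x = φ x μ *
      (1 + l₂ * ((x - μ)^2 - 1) + l₄ * ((x - μ)^4 - 6*(x - μ)^2 + 3))) :
    (∀ x, 0 < g x) ∧ (∫ x, (x - μ)^2 * g x = 1 + 2 * l₂) ∧ 1 + 2 * l₂ < 1 := by
  refine ⟨fun x => ?_, ?_, by norm_num [hl₂]⟩
  · rw [hg, hφ, hl₂, hl₄]
    exact mul_pos (div_pos (exp_pos _) (by positivity)) (local_mixture_factor_pos (x - μ))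
  · simp_rw [hg, hφ]
    exact (integral_sub_right_eq_self (fun z => z ^ 2 * (exp (-z ^ 2 / 2) / √(2 * π) *
      (1 + l₂ * (z ^ 2 - 1) + l₄ * (z ^ 4 - 6 * z ^ 2 + 3)))) μ).trans
      (integral_sq_mul_local_mixture l₂ l₄)
end

section
/- Let f(x;μ) be a smooth mean-parametrized family of densities satisfying ∫ xⁱ f⁽ᵏ⁾(x;μ) dν(x) = 0 for all 1 ≤ i ≤ r and k > r (as holds for the binomial family with r = 4). If two functions of the form g = f(·;μ) + ∑ₖ₌₂ʳ λₖ f⁽ᵏ⁾(·;μ) and h = ∫f(·;m)dQ(m) differ by a linear combination of derivatives f⁽ᵏ⁾(·;μ) with k > r, then g and h have identical first r moments. -/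
open MeasureTheory

/-- If all derivatives `f⁽ᵏ⁾(·;μ)` with `k > r` have vanishing `i`-th moments for
`1 ≤ i ≤ r`, then two functions differing by a linear combination of such derivatives
have identical first `r` moments. -/
theorem higher_derivative_remainder_preserves_moments
    (ν : Measure ℝ) (f : ℝ → ℝ → ℝ) (μ : ℝ) (r s : ℕ)
    (hvanish : ∀ i ∈ Finset.Icc 1 r, ∀ k, r < k →
      ∫ x, (x : ℝ)^i * iteratedDeriv k (fun m => f x m) μ ∂ν = 0)
    (g h : ℝ → ℝ) (c : ℕ → ℝ)
    (hdiff : ∀ x, h x - g x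
      = ∑ k ∈ Finset.Icc (r + 1) s, c k * iteratedDeriv k (fun m => f x m) μ)
    (hint_g : ∀ i ∈ Finset.Icc 1 r, Integrable (fun x => (x : ℝ)^i * g x) ν)
    (hint_deriv : ∀ i ∈ Finset.Icc 1 r, ∀ k, r < k →
      Integrable (fun x => (x : ℝ)^i * iteratedDeriv k (fun m => f x m) μ) ν) :
    ∀ i ∈ Finset.Icc 1 r, ∫ x, (x : ℝ)^i * g x ∂ν = ∫ x, (x : ℝ)^i * h x ∂ν := by
  intro i hi
  have hk : ∀ k ∈ Finset.Icc (r + 1) s, r < k := by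
    intro k hk; exact Nat.lt_of_succ_le (Finset.mem_Icc.mp hk).1
  have heq : ∀ x, (x : ℝ)^i * h x
      = (x : ℝ)^i * g x + ∑ k ∈ Finset.Icc (r + 1) s,
          c k * ((x : ℝ)^i * iteratedDeriv k (fun m => f x m) μ) := by
    intro x
    have := hdiff x
    have hx : h x = g x + ∑ k ∈ Finset.Icc (r + 1) s,
        c k * iteratedDeriv k (fun m => f x m) μ := by linarith
    rw [hx, mul_add, Finset.mul_sum]
    congr 1; exact Finset.sum_congr rfl (fun k _ => by ring)
  have hintsum : Integrable (fun x => ∑ k ∈ Finset.Icc (r + 1) s,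
      c k * ((x : ℝ)^i * iteratedDeriv k (fun m => f x m) μ)) ν :=
    integrable_finset_sum _ (fun k hkm =>
      ((hint_deriv i hi k (hk k hkm)).const_mul (c k)))
  calc ∫ x, (x : ℝ)^i * g x ∂ν
      = ∫ x, (x : ℝ)^i * g x ∂ν + ∑ k ∈ Finset.Icc (r + 1) s,
          c k * ∫ x, (x : ℝ)^i * iteratedDeriv k (fun m => f x m) μ ∂ν := by
        rw [Finset.sum_eq_zero (fun k hkm => by rw [hvanish i hi k (hk k hkm), mul_zero])]
        ring
    _ = ∫ x, ((x : ℝ)^i * g x + ∑ k ∈ Finset.Icc (r + 1) s,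
          c k * ((x : ℝ)^i * iteratedDeriv k (fun m => f x m) μ)) ∂ν := by
        rw [integral_add (hint_g i hi) hintsum, integral_finset_sum _
          (fun k hkm => ((hint_deriv i hi k (hk k hkm)).const_mul (c k)))]
        simp_rw [integral_const_mul]
    _ = ∫ x, (x : ℝ)^i * h x ∂ν := by simp_rw [heq]
end

section
/- Let f(x;μ) be a natural exponential family in mean parametrization with variance function V_f(μ) = ∫(x-μ)² f(x;μ)dν(x), and suppose V_f is a polynomial of degree at most 2. Define Pₖ(x;μ) = V_f(μ)ᵏ · f⁽ᵏ⁾(x;μ)/f(x;μ). Then for k ≠ j, ∫ Pₖ(x;μ) Pⱼ(x;μ) f(x;μ) dν(x) = 0, i.e., the {Pₖ} form an orthogonal system with respect to f(·;μ). -/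
open MeasureTheory ProbabilityTheory Real Set Filter Topology
open Polynomial (C X derivative)
open scoped Polynomial ContDiff

/-!
Write `f(x;m) = exp(θ(m) x - κ(m))`. For fixed `x`, the functions `m ↦ xⁿ f(x;m)` satisfy
`gₙ' = θ' gₙ₊₁ - κ' gₙ`, and so do the moments `Mₙ(m) = ∫ xⁿ f(x;m) dν`: these are
`exp(-κ(m))` times derivatives of the moment generating function of `ν` at `θ(m)`, which lies in
the interior of its domain because `θ` is continuous and injective. Both families therefore have
`k`-th derivatives with the same coefficients, `f⁽ᵏ⁾ = (∑ cₖᵢ xⁱ) f` and `Mₗ⁽ᵏ⁾ = ∑ cₖᵢ Mₗ₊ᵢ`,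
whence `∫ xˡ f⁽ᵏ⁾ dν = Mₗ⁽ᵏ⁾`. Differentiating `M₀ = 1` and `M₁ = m` gives `κ' = m θ'` and
`θ' V = 1`, so `Mₙ₊₁ = m Mₙ + V Mₙ'`; as `V` is quadratic, `Mₗ` is a polynomial of degree `≤ l`,
and `∫ xˡ f⁽ᵏ⁾ dν = 0` for `l < k`. Since `f⁽ʲ⁾ / f` is a polynomial of degree `≤ j` in `x`, this
is the orthogonality.
-/

-- The coefficients of `∂ᵏ gₙ` in terms of `gₙ, …, gₙ₊ₖ` for a family with
-- `gₙ' = a gₙ₊₁ - b gₙ`.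
noncomputable def derivCoeff (a b : ℝ → ℝ) : ℕ → ℕ → ℝ → ℝ
  | 0, i, _ => if i = 0 then 1 else 0
  | k + 1, i, m => deriv (derivCoeff a b k i) m - b m * derivCoeff a b k i m
      + a m * if i = 0 then 0 else derivCoeff a b k (i - 1) m

theorem derivCoeff_of_lt {a b : ℝ → ℝ} {k i : ℕ} (h : k < i) : derivCoeff a b k i = 0 := by
  induction k generalizing i with
  | zero => funext m; simp [derivCoeff, h.ne']
  | succ k ih =>
    have hi : i ≠ 0 := by omega
    funext m
    simp [derivCoeff, ih (by omega : k < i), ih (by omega : k < i - 1), hi]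

theorem contDiffOn_derivCoeff {U : Set ℝ} (hU : IsOpen U) {a b : ℝ → ℝ}
    (ha : ContDiffOn ℝ ∞ a U) (hb : ContDiffOn ℝ ∞ b U) (k i : ℕ) :
    ContDiffOn ℝ ∞ (derivCoeff a b k i) U := by
  induction k generalizing i with
  | zero => exact contDiffOn_const
  | succ k ih =>
    have hprev :
        ContDiffOn ℝ ∞ (fun m => if i = 0 then 0 else derivCoeff a b k (i - 1) m) U := by
      split_ifs
      · exact contDiffOn_const
      · exact ih _
    exact (((ih i).deriv_of_isOpen hU le_rfl).sub (hb.mul (ih i))).add (ha.mul hprev)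

theorem sum_range_succ_shift (c : ℕ → ℝ) (g : ℕ → ℝ) (N : ℕ) :
    ∑ i ∈ Finset.range (N + 1), (if i = 0 then 0 else c (i - 1)) * g i =
      ∑ i ∈ Finset.range N, c i * g (i + 1) := by
  rw [Finset.sum_range_succ']
  simp

theorem iteratedDeriv_eq_sum_derivCoeff {U : Set ℝ} (hU : IsOpen U) {a b : ℝ → ℝ}
    (ha : ContDiffOn ℝ ∞ a U) (hb : ContDiffOn ℝ ∞ b U) {g : ℕ → ℝ → ℝ}
    (hg : ∀ n, ∀ m ∈ U, HasDerivAt (g n) (a m * g (n + 1) m - b m * g n m) m)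
    (k n : ℕ) {m : ℝ} (hm : m ∈ U) :
    iteratedDeriv k (g n) m = ∑ i ∈ Finset.range (k + 1), derivCoeff a b k i m * g (n + i) m := by
  induction k generalizing m with
  | zero => simp [derivCoeff]
  | succ k ih =>
    have hcoeff : ∀ i, DifferentiableAt ℝ (derivCoeff a b k i) m := fun i =>
      ((contDiffOn_derivCoeff hU ha hb k i).differentiableOn (by simp)).differentiableAt
        (hU.mem_nhds hm)
    have hsum :
        HasDerivAt (fun m => ∑ i ∈ Finset.range (k + 1), derivCoeff a b k i m * g (n + i) m)
        (∑ i ∈ Finset.range (k + 1), (deriv (derivCoeff a b k i) m * g (n + i) m +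
          derivCoeff a b k i m * (a m * g (n + i + 1) m - b m * g (n + i) m))) m :=
      HasDerivAt.fun_sum fun i _ => (hcoeff i).hasDerivAt.mul (hg (n + i) m hm)
    have hlocal : iteratedDeriv k (g n) =ᶠ[𝓝 m]
        fun m => ∑ i ∈ Finset.range (k + 1), derivCoeff a b k i m * g (n + i) m :=
      eventually_of_mem (hU.mem_nhds hm) fun m' hm' => ih hm'
    rw [iteratedDeriv_succ, hlocal.deriv_eq, hsum.deriv]
    have hlast : derivCoeff a b k (k + 1) = 0 := derivCoeff_of_lt (Nat.lt_succ_self k)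
    simp only [derivCoeff, add_mul, Finset.sum_add_distrib, mul_assoc]
    rw [Finset.sum_range_succ _ (k + 1), hlast, ← Finset.mul_sum,
      sum_range_succ_shift (fun i => derivCoeff a b k i m) (fun i => g (n + i) m)]
    simp only [Pi.zero_apply, deriv_zero, mul_zero, sub_zero, zero_mul, add_zero]
    rw [Finset.mul_sum, ← Finset.sum_add_distrib, ← Finset.sum_add_distrib]
    exact Finset.sum_congr rfl fun i _ => by rw [← add_assoc]; ring

theorem mem_interior_of_injOn_of_mapsTo {U s : Set ℝ} {g : ℝ → ℝ} (hU : IsOpen U)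
    (hg : ContinuousOn g U) (hinj : InjOn g U) (hs : s.OrdConnected) (hgs : MapsTo g U s)
    {x : ℝ} (hx : x ∈ U) : g x ∈ interior s := by
  have between {p q : ℝ} (hp : p ∈ s) (hq : q ∈ s) (hpx : p < g x) (hxq : g x < q) :
      g x ∈ interior s :=
    mem_interior_iff_mem_nhds.mpr
      (mem_of_superset (Ioo_mem_nhds hpx hxq) (Ioo_subset_Icc_self.trans (hs.out hp hq)))
  obtain ⟨ε, hε, hball⟩ := Metric.nhds_basis_closedBall.mem_iff.mp (hU.mem_nhds hx)
  rw [Real.closedBall_eq_Icc] at hball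
  have hl : x - ε ∈ Icc (x - ε) (x + ε) := left_mem_Icc.mpr (by linarith)
  have hr : x + ε ∈ Icc (x - ε) (x + ε) := right_mem_Icc.mpr (by linarith)
  have hc : x ∈ Icc (x - ε) (x + ε) := ⟨by linarith, by linarith⟩
  rcases (hg.mono hball).strictMonoOn_of_injOn_Icc' (by linarith) (hinj.mono hball)
    with hmono | hanti
  · exact between (hgs (hball hl)) (hgs (hball hr))
      (hmono hl hc (by linarith)) (hmono hc hr (by linarith))
  · exact between (hgs (hball hr)) (hgs (hball hl))
      (hanti hc hr (by linarith)) (hanti hl hc (by linarith))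

theorem Polynomial.iteratedDeriv_eval (p : ℝ[X]) (k : ℕ) :
    iteratedDeriv k (fun x => p.eval x) = fun x => (derivative^[k] p).eval x := by
  induction k generalizing p with
  | zero => rfl
  | succ k ih =>
    have hderiv : _root_.deriv (fun x => p.eval x) = fun x => (derivative p).eval x := by
      ext x
      exact p.deriv
    rw [iteratedDeriv_succ', hderiv, ih, Function.iterate_succ_apply]

theorem Polynomial.natDegree_mul_derivative_le {R : Type*} [Semiring R] {q p : R[X]} {n : ℕ}
    (hq : q.natDegree ≤ 2) (hp : p.natDegree ≤ n) : (q * derivative p).natDegree ≤ n + 1 := by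
  by_cases hp0 : p.natDegree = 0
  · simp [Polynomial.derivative_of_natDegree_zero hp0]
  · have := Polynomial.natDegree_derivative_lt hp0
    have := Polynomial.natDegree_mul_le (p := q) (q := derivative p)
    omega

namespace NatExpFamily

variable {ν : Measure ℝ} {θ κ : ℝ → ℝ}

noncomputable def moment (ν : Measure ℝ) (θ κ : ℝ → ℝ) (n : ℕ) (m : ℝ) : ℝ :=
  ∫ x, x ^ n * exp (θ m * x - κ m) ∂ν

theorem moment_eq_exp_neg_mul (n : ℕ) (m : ℝ) :
    moment ν θ κ n m = exp (-κ m) * ∫ x, x ^ n * exp (θ m * x) ∂ν := by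
  rw [moment, ← integral_const_mul]
  congr 1 with x
  rw [sub_eq_add_neg, exp_add]
  ring

theorem mem_integrableExpSet_of_integral_ne_zero {t c : ℝ}
    (h : ∫ x, exp (t * x - c) ∂ν ≠ 0) : t ∈ integrableExpSet id ν := by
  have hint := (Integrable.of_integral_ne_zero h).const_mul (exp c)
  refine hint.congr (ae_of_all _ fun x => ?_)
  simp only [id, ← exp_add]
  congr 1
  ring

theorem integrable_pow_mul_exp_sub {t : ℝ} (ht : t ∈ interior (integrableExpSet id ν))
    (c : ℝ) (n : ℕ) : Integrable (fun x => x ^ n * exp (t * x - c)) ν := by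
  refine ((integrable_pow_mul_exp_of_mem_interior_integrableExpSet ht n).const_mul
    (exp (-c))).congr (ae_of_all _ fun x => ?_)
  simp only [id, sub_eq_add_neg, exp_add]
  ring

theorem hasDerivAt_pow_mul_exp {θ' κ' m : ℝ} (hθ : HasDerivAt θ θ' m) (hκ : HasDerivAt κ κ' m)
    (x : ℝ) (n : ℕ) :
    HasDerivAt (fun m => x ^ n * exp (θ m * x - κ m))
      (θ' * (x ^ (n + 1) * exp (θ m * x - κ m)) - κ' * (x ^ n * exp (θ m * x - κ m))) m := by
  refine (((hθ.mul_const x).fun_sub hκ).exp.const_mul (x ^ n)).congr_deriv ?_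
  ring

theorem hasDerivAt_moment {θ' κ' m : ℝ} (hθm : θ m ∈ interior (integrableExpSet id ν))
    (hθ : HasDerivAt θ θ' m) (hκ : HasDerivAt κ κ' m) (n : ℕ) :
    HasDerivAt (moment ν θ κ n)
      (θ' * moment ν θ κ (n + 1) m - κ' * moment ν θ κ n m) m := by
  have hexp := (hasDerivAt_integral_pow_mul_exp_real (X := id) hθm n).comp m hθ
  have hprod := hκ.neg.exp.fun_mul hexp
  simp only [Function.comp_def, id, Pi.neg_apply] at hprod
  rw [funext (moment_eq_exp_neg_mul (ν := ν) (θ := θ) (κ := κ) n)]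
  refine hprod.congr_deriv ?_
  rw [moment_eq_exp_neg_mul]
  ring

structure IsMeanParam (ν : Measure ℝ) (θ κ : ℝ → ℝ) (M : Set ℝ) : Prop where
  isOpen : IsOpen M
  contDiffOn_natParam : ContDiffOn ℝ ∞ θ M
  contDiffOn_logPartition : ContDiffOn ℝ ∞ κ M
  moment_zero : ∀ m ∈ M, moment ν θ κ 0 m = 1
  moment_one : ∀ m ∈ M, moment ν θ κ 1 m = m

namespace IsMeanParam

variable {M : Set ℝ}

theorem injOn (h : IsMeanParam ν θ κ M) : InjOn θ M := by
  intro m₁ hm₁ m₂ hm₂ hθ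
  have hnorm (m : ℝ) (hm : m ∈ M) : exp (-κ m) * ∫ x, exp (θ m * x) ∂ν = 1 := by
    simpa [moment_eq_exp_neg_mul] using h.moment_zero m hm
  have hκ : κ m₁ = κ m₂ := by
    have h₁ := hnorm m₁ hm₁
    rw [← hnorm m₂ hm₂, hθ] at h₁
    simpa using mul_right_cancel₀ (right_ne_zero_of_mul_eq_one (hnorm m₂ hm₂)) h₁
  rw [← h.moment_one m₁ hm₁, ← h.moment_one m₂ hm₂, moment, moment, hθ, hκ]

theorem mem_interior_integrableExpSet (h : IsMeanParam ν θ κ M) {m : ℝ} (hm : m ∈ M) :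
    θ m ∈ interior (integrableExpSet id ν) := by
  refine mem_interior_of_injOn_of_mapsTo h.isOpen h.contDiffOn_natParam.continuousOn h.injOn
    convex_integrableExpSet.ordConnected (fun m hm => ?_) hm
  have hnorm : ∫ x, exp (θ m * x - κ m) ∂ν = 1 := by simpa [moment] using h.moment_zero m hm
  exact mem_integrableExpSet_of_integral_ne_zero (hnorm ▸ one_ne_zero)

theorem hasDerivAt_natParam (h : IsMeanParam ν θ κ M) {m : ℝ} (hm : m ∈ M) :
    HasDerivAt θ (deriv θ m) m :=
  ((h.contDiffOn_natParam.differentiableOn (by simp)).differentiableAt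
    (h.isOpen.mem_nhds hm)).hasDerivAt

theorem hasDerivAt_logPartition (h : IsMeanParam ν θ κ M) {m : ℝ} (hm : m ∈ M) :
    HasDerivAt κ (deriv κ m) m :=
  ((h.contDiffOn_logPartition.differentiableOn (by simp)).differentiableAt
    (h.isOpen.mem_nhds hm)).hasDerivAt

theorem hasDerivAt_moment (h : IsMeanParam ν θ κ M) {m : ℝ} (hm : m ∈ M) (n : ℕ) :
    HasDerivAt (moment ν θ κ n)
      (deriv θ m * moment ν θ κ (n + 1) m - deriv κ m * moment ν θ κ n m) m :=
  NatExpFamily.hasDerivAt_moment (h.mem_interior_integrableExpSet hm) (h.hasDerivAt_natParam hm)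
    (h.hasDerivAt_logPartition hm) n

theorem deriv_logPartition (h : IsMeanParam ν θ κ M) {m : ℝ} (hm : m ∈ M) :
    deriv κ m = m * deriv θ m := by
  have hconst : HasDerivAt (moment ν θ κ 0) 0 m :=
    (hasDerivAt_const m (1 : ℝ)).congr_of_eventuallyEq
      (eventually_of_mem (h.isOpen.mem_nhds hm) h.moment_zero)
  have hderiv := (h.hasDerivAt_moment hm 0).unique hconst
  rw [zero_add, h.moment_one m hm, h.moment_zero m hm] at hderiv
  linarith

theorem integral_sub_sq_mul_exp (h : IsMeanParam ν θ κ M) {m : ℝ} (hm : m ∈ M) :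
    ∫ x, (x - m) ^ 2 * exp (θ m * x - κ m) ∂ν = moment ν θ κ 2 m - m ^ 2 := by
  have hint := integrable_pow_mul_exp_sub (h.mem_interior_integrableExpSet hm) (κ m)
  calc ∫ x, (x - m) ^ 2 * exp (θ m * x - κ m) ∂ν
      = ∫ x, (x ^ 2 * exp (θ m * x - κ m) - 2 * m * (x ^ 1 * exp (θ m * x - κ m)))
          + m ^ 2 * (x ^ 0 * exp (θ m * x - κ m)) ∂ν :=
        integral_congr_ae (ae_of_all _ fun x => by ring)
    _ = moment ν θ κ 2 m - 2 * m * moment ν θ κ 1 m + m ^ 2 * moment ν θ κ 0 m := by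
        rw [integral_add ?_ ((hint 0).const_mul _), integral_sub (hint 2) ((hint 1).const_mul _),
          integral_const_mul, integral_const_mul]
        · rfl
        · exact (hint 2).sub ((hint 1).const_mul _)
    _ = moment ν θ κ 2 m - m ^ 2 := by
        rw [h.moment_one m hm, h.moment_zero m hm]
        ring

theorem deriv_natParam_mul_variance (h : IsMeanParam ν θ κ M) {m : ℝ} (hm : m ∈ M) :
    deriv θ m * (moment ν θ κ 2 m - m ^ 2) = 1 := by
  have hid : HasDerivAt (moment ν θ κ 1) 1 m :=
    (hasDerivAt_id m).congr_of_eventuallyEq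
      (eventually_of_mem (h.isOpen.mem_nhds hm) h.moment_one)
  have hderiv := (h.hasDerivAt_moment hm 1).unique hid
  rw [h.deriv_logPartition hm, h.moment_one m hm] at hderiv
  linear_combination hderiv

theorem moment_succ (h : IsMeanParam ν θ κ M) {m : ℝ} (hm : m ∈ M) (n : ℕ) :
    moment ν θ κ (n + 1) m =
      m * moment ν θ κ n m + (moment ν θ κ 2 m - m ^ 2) * deriv (moment ν θ κ n) m := by
  rw [(h.hasDerivAt_moment hm n).deriv, h.deriv_logPartition hm]
  linear_combination -(moment ν θ κ (n + 1) m - m * moment ν θ κ n m) *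
    h.deriv_natParam_mul_variance hm

theorem exists_natDegree_le_eqOn_moment (h : IsMeanParam ν θ κ M) {q : ℝ[X]}
    (hq : q.natDegree ≤ 2) (hvar : ∀ m ∈ M, moment ν θ κ 2 m - m ^ 2 = q.eval m) (n : ℕ) :
    ∃ p : ℝ[X], p.natDegree ≤ n ∧ EqOn (moment ν θ κ n) (fun m => p.eval m) M := by
  induction n with
  | zero => exact ⟨1, by simp, fun m hm => by simpa using h.moment_zero m hm⟩
  | succ n ih =>
    obtain ⟨p, hp, hmoment⟩ := ih
    refine ⟨X * p + q * derivative p, ?_, fun m hm => ?_⟩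
    · refine (Polynomial.natDegree_add_le _ _).trans
        (max_le ?_ (Polynomial.natDegree_mul_derivative_le hq hp))
      exact (Polynomial.natDegree_mul_le).trans (by simp; omega)
    · have hderiv : deriv (moment ν θ κ n) m = (derivative p).eval m := by
        rw [(eventuallyEq_of_mem (h.isOpen.mem_nhds hm) hmoment).deriv_eq]
        exact p.deriv
      simp only [h.moment_succ hm n, hvar m hm, hderiv, hmoment hm, Polynomial.eval_add,
        Polynomial.eval_mul, Polynomial.eval_X]

theorem iteratedDeriv_moment_eq_zero (h : IsMeanParam ν θ κ M) {q : ℝ[X]}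
    (hq : q.natDegree ≤ 2) (hvar : ∀ m ∈ M, moment ν θ κ 2 m - m ^ 2 = q.eval m)
    {k l : ℕ} (hlk : l < k) {m : ℝ} (hm : m ∈ M) : iteratedDeriv k (moment ν θ κ l) m = 0 := by
  obtain ⟨p, hp, hmoment⟩ := h.exists_natDegree_le_eqOn_moment hq hvar l
  rw [((eventuallyEq_of_mem (h.isOpen.mem_nhds hm) hmoment).iteratedDeriv k).eq_of_nhds,
    p.iteratedDeriv_eval, Polynomial.iterate_derivative_eq_zero (hp.trans_lt hlk)]
  exact Polynomial.eval_zero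

theorem iteratedDeriv_exp_eq_sum (h : IsMeanParam ν θ κ M) {m : ℝ} (hm : m ∈ M) (k : ℕ)
    (x : ℝ) :
    iteratedDeriv k (fun m => exp (θ m * x - κ m)) m =
      ∑ i ∈ Finset.range (k + 1),
        derivCoeff (deriv θ) (deriv κ) k i m * (x ^ i * exp (θ m * x - κ m)) := by
  simpa using iteratedDeriv_eq_sum_derivCoeff (g := fun n m => x ^ n * exp (θ m * x - κ m))
    h.isOpen (h.contDiffOn_natParam.deriv_of_isOpen h.isOpen le_rfl)
    (h.contDiffOn_logPartition.deriv_of_isOpen h.isOpen le_rfl)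
    (fun n _ hm => hasDerivAt_pow_mul_exp (h.hasDerivAt_natParam hm)
      (h.hasDerivAt_logPartition hm) x n) k 0 hm

theorem iteratedDeriv_moment_eq_sum (h : IsMeanParam ν θ κ M) {m : ℝ} (hm : m ∈ M) (k n : ℕ) :
    iteratedDeriv k (moment ν θ κ n) m =
      ∑ i ∈ Finset.range (k + 1), derivCoeff (deriv θ) (deriv κ) k i m * moment ν θ κ (n + i) m :=
  iteratedDeriv_eq_sum_derivCoeff h.isOpen
    (h.contDiffOn_natParam.deriv_of_isOpen h.isOpen le_rfl)
    (h.contDiffOn_logPartition.deriv_of_isOpen h.isOpen le_rfl)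
    (fun n _ hm => h.hasDerivAt_moment hm n) k n hm

theorem pow_mul_iteratedDeriv_exp_eq_sum (h : IsMeanParam ν θ κ M) {m : ℝ} (hm : m ∈ M)
    (k l : ℕ) (x : ℝ) :
    x ^ l * iteratedDeriv k (fun m => exp (θ m * x - κ m)) m =
      ∑ i ∈ Finset.range (k + 1),
        derivCoeff (deriv θ) (deriv κ) k i m * (x ^ (l + i) * exp (θ m * x - κ m)) := by
  rw [h.iteratedDeriv_exp_eq_sum hm k x, Finset.mul_sum]
  exact Finset.sum_congr rfl fun i _ => by ring

theorem integrable_pow_mul_iteratedDeriv_exp (h : IsMeanParam ν θ κ M) {m : ℝ} (hm : m ∈ M)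
    (k l : ℕ) :
    Integrable (fun x => x ^ l * iteratedDeriv k (fun m => exp (θ m * x - κ m)) m) ν := by
  simp only [h.pow_mul_iteratedDeriv_exp_eq_sum hm k l]
  exact integrable_finsetSum _ fun i _ =>
    (integrable_pow_mul_exp_sub (h.mem_interior_integrableExpSet hm) (κ m) (l + i)).const_mul _

theorem integral_pow_mul_iteratedDeriv_exp (h : IsMeanParam ν θ κ M) {m : ℝ} (hm : m ∈ M)
    (k l : ℕ) :
    ∫ x, x ^ l * iteratedDeriv k (fun m => exp (θ m * x - κ m)) m ∂ν =
      iteratedDeriv k (moment ν θ κ l) m := by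
  simp only [h.pow_mul_iteratedDeriv_exp_eq_sum hm k l]
  rw [integral_finsetSum _ fun i _ =>
      (integrable_pow_mul_exp_sub (h.mem_interior_integrableExpSet hm) (κ m) (l + i)).const_mul _,
    h.iteratedDeriv_moment_eq_sum hm]
  simp only [integral_const_mul]
  rfl

theorem integral_iteratedDeriv_mul_iteratedDeriv_div_eq_zero (h : IsMeanParam ν θ κ M)
    {q : ℝ[X]} (hq : q.natDegree ≤ 2) (hvar : ∀ m ∈ M, moment ν θ κ 2 m - m ^ 2 = q.eval m)
    {k j : ℕ} (hkj : k ≠ j) {m : ℝ} (hm : m ∈ M) :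
    ∫ x, iteratedDeriv k (fun m => exp (θ m * x - κ m)) m *
        iteratedDeriv j (fun m => exp (θ m * x - κ m)) m / exp (θ m * x - κ m) ∂ν = 0 := by
  wlog hjk : j < k generalizing k j
  · rw [← this hkj.symm (hkj.lt_or_gt.resolve_right hjk)]
    congr 1 with x
    ring
  have hterm (x : ℝ) :
      iteratedDeriv k (fun m => exp (θ m * x - κ m)) m *
          iteratedDeriv j (fun m => exp (θ m * x - κ m)) m / exp (θ m * x - κ m) =
        ∑ l ∈ Finset.range (j + 1), derivCoeff (deriv θ) (deriv κ) j l m *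
          (x ^ l * iteratedDeriv k (fun m => exp (θ m * x - κ m)) m) := by
    rw [h.iteratedDeriv_exp_eq_sum hm j x, Finset.mul_sum, Finset.sum_div]
    refine Finset.sum_congr rfl fun l _ => ?_
    rw [mul_div_assoc, mul_div_assoc, mul_div_cancel_right₀ _ (exp_pos _).ne']
    ring
  simp only [hterm]
  rw [integral_finsetSum _ fun l _ => (h.integrable_pow_mul_iteratedDeriv_exp hm k l).const_mul _]
  refine Finset.sum_eq_zero fun l hl => ?_
  rw [integral_const_mul, h.integral_pow_mul_iteratedDeriv_exp hm,
    h.iteratedDeriv_moment_eq_zero hq hvar ((Finset.mem_range_succ_iff.mp hl).trans_lt hjk) hm,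
    mul_zero]

end IsMeanParam

end NatExpFamily

/-- Morris's orthogonality: for a natural exponential family in mean parametrization
with variance function a polynomial of degree at most 2, the functions
`Pₖ(x;μ) = V(μ)ᵏ f⁽ᵏ⁾(x;μ)/f(x;μ)` form an orthogonal system w.r.t. `f(·;μ)`. -/
theorem quadratic_variance_derivative_polynomials_orthogonal
    (ν : Measure ℝ) (θ κ : ℝ → ℝ) (f : ℝ → ℝ → ℝ)
    (M : Set ℝ) (hM : IsOpen M)
    (hf : ∀ x m, f x m = Real.exp (θ m * x - κ m))
    (hθ : ContDiffOn ℝ ⊤ θ M) (hκ : ContDiffOn ℝ ⊤ κ M)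
    (hnorm : ∀ m ∈ M, ∫ x, f x m ∂ν = 1)
    (hmean : ∀ m ∈ M, ∫ x, x * f x m ∂ν = m)
    (V : ℝ → ℝ)
    (hV : ∀ m ∈ M, V m = ∫ x, (x - m)^2 * f x m ∂ν)
    (hquad : ∃ a b c : ℝ, ∀ m ∈ M, V m = a * m^2 + b * m + c) :
    ∀ μ ∈ M, ∀ k j : ℕ, k ≠ j →
      ∫ x, ((V μ)^k * iteratedDerivWithin k (fun m => f x m) M μ / f x μ)
          * ((V μ)^j * iteratedDerivWithin j (fun m => f x m) M μ / f x μ)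
          * f x μ ∂ν = 0 := by
  obtain rfl : f = fun x m => exp (θ m * x - κ m) := funext₂ hf
  have h : NatExpFamily.IsMeanParam ν θ κ M :=
    ⟨hM, hθ.of_le le_top, hκ.of_le le_top,
      fun m hm => by simpa [NatExpFamily.moment] using hnorm m hm,
      fun m hm => by simpa [NatExpFamily.moment] using hmean m hm⟩
  obtain ⟨a, b, c, hquad⟩ := hquad
  have hvar (m : ℝ) (hm : m ∈ M) :
      NatExpFamily.moment ν θ κ 2 m - m ^ 2 = (C a * X ^ 2 + C b * X + C c).eval m := by
    simp [← h.integral_sub_sq_mul_exp hm, ← hV m hm, hquad m hm]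
  intro μ hμ k j hkj
  rw [← mul_zero (V μ ^ k * V μ ^ j), ← h.integral_iteratedDeriv_mul_iteratedDeriv_div_eq_zero
    Polynomial.natDegree_quadratic_le hvar hkj hμ, ← integral_const_mul]
  refine integral_congr_ae (ae_of_all _ fun x => ?_)
  dsimp only
  rw [iteratedDerivWithin_of_isOpen hM hμ, iteratedDerivWithin_of_isOpen hM hμ, mul_assoc,
    div_mul_cancel₀ _ (exp_pos _).ne']
  ring
end

section
/- Let f(x;μ) be a regular natural exponential family with quadratic variance function, and g(x;μ,λ) = f(x;μ) + ∑ᵢ₌₂ʳ λᵢ f⁽ⁱ⁾(x;μ) its local mixture model. Then at λ = 0, the Fisher information matrix in the (μ, λ) parametrization is block diagonal: ∫ (∂/∂μ log g)(∂/∂λᵢ log g) f(x;μ) dν(x) = 0 for all i = 2,…,r. -/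
/-!
At `λ = 0` the `μ`-score is `θ'(μ) x - κ'(μ)` and the `λᵢ`-score is `f⁽ⁱ⁾/f`, so the integral is
`∫ (θ'(μ) x - κ'(μ)) f⁽ⁱ⁾(x;μ) dν`. Differentiating `i` times under the integral sign gives
`∫ xᵖ f⁽ⁱ⁾(x;μ) dν = dⁱ/dμⁱ ∫ xᵖ f(x;μ) dν`; the zeroth and first moments are `1` and `μ`, so
both terms vanish for `i ≥ 2`.

Differentiation under the integral is justified by the Faà di Bruno bound
`|f⁽ᵏ⁾(x;m)| ≤ C (1 + |x|)ᵏ f(x;m)`, locally uniform in `m`, and by `θ(μ)` lying strictly between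
two values `θ(a) < θ(μ) < θ(c)` (`θ` is injective because the mean parametrizes the family), so
that `(1 + |x|)ᴺ f(x;m)` is dominated by a multiple of `e^{θ(a) x} + e^{θ(c) x}` for `m` near `μ`.
-/

open MeasureTheory Filter Topology Set Real
open scoped Nat ContDiff

section

variable {M : Set ℝ}

lemma pow_le_factorial_div_pow_mul_exp (n : ℕ) {δ y : ℝ} (hδ : 0 < δ) (hy : 0 ≤ y) :
    y ^ n ≤ n ! / δ ^ n * exp (δ * y) := by
  have h := Real.pow_div_factorial_le_exp _ (mul_nonneg hδ.le hy) n
  rw [mul_pow, div_le_iff₀ (by positivity)] at h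
  rw [div_mul_eq_mul_div, le_div_iff₀ (by positivity)]
  linarith

lemma exp_mul_abs_add_mul_le {l c h δ : ℝ} (hl : l + δ ≤ c) (hh : c + δ ≤ h) (x : ℝ) :
    exp (δ * |x| + c * x) ≤ exp (l * x) + exp (h * x) := by
  rcases le_total 0 x with hx | hx
  · have : exp (δ * |x| + c * x) ≤ exp (h * x) :=
      exp_le_exp.2 (by rw [abs_of_nonneg hx]; nlinarith)
    linarith [exp_pos (l * x)]
  · have : exp (δ * |x| + c * x) ≤ exp (l * x) :=
      exp_le_exp.2 (by rw [abs_of_nonpos hx]; nlinarith)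
    linarith [exp_pos (h * x)]

section ParametricIntegral

variable {α : Type*} [MeasurableSpace α] {ν : Measure α}

lemma aestronglyMeasurable_of_hasDerivAt {F : ℝ → α → ℝ} {F' : α → ℝ} {t₀ : ℝ}
    (hF : ∀ᶠ t in 𝓝 t₀, AEStronglyMeasurable (F t) ν)
    (hF' : ∀ x, HasDerivAt (F · x) (F' x) t₀) :
    AEStronglyMeasurable F' ν := by
  obtain ⟨ε, hε, hball⟩ := Metric.eventually_nhds_iff.1 hF
  let v : ℕ → ℝ := fun n => ε / 2 * ((n : ℝ) + 1)⁻¹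
  have hv_pos : ∀ n, 0 < v n := fun n => by positivity
  have hv : Tendsto v atTop (𝓝[>] 0) := by
    refine tendsto_nhdsWithin_iff.2 ⟨?_, Eventually.of_forall hv_pos⟩
    simpa using (tendsto_one_div_add_atTop_nhds_zero_nat (𝕜 := ℝ)).const_mul (ε / 2)
  have hvε : ∀ n, dist (t₀ + v n) t₀ < ε := fun n => by
    have : ((n : ℝ) + 1)⁻¹ ≤ 1 := inv_le_one_of_one_le₀ (by simp)
    rw [dist_eq, add_sub_cancel_left, abs_of_pos (hv_pos n)]
    change ε / 2 * _ < ε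
    nlinarith
  refine aestronglyMeasurable_of_tendsto_ae atTop
    (f := fun n x => (v n)⁻¹ • (F (t₀ + v n) x - F t₀ x)) (fun n => ?_)
    (ae_of_all _ fun x => (hF' x).tendsto_slope_zero_right.comp hv)
  exact ((hball (hvε n)).sub (hball (y := t₀) (by simpa using hε))).const_smul (v n)⁻¹

lemma hasDerivAt_iteratedDerivWithin {g : ℝ → ℝ} (hM : IsOpen M) (hg : ContDiffOn ℝ ∞ g M)
    (k : ℕ) {t : ℝ} (ht : t ∈ M) :
    HasDerivAt (iteratedDerivWithin k g M) (iteratedDerivWithin (k + 1) g M t) t := by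
  rw [iteratedDerivWithin_succ, derivWithin_of_isOpen hM ht]
  exact ((hg.differentiableOn_iteratedDerivWithin (by exact_mod_cast WithTop.coe_lt_top _)
    hM.uniqueDiffOn t ht).differentiableAt (hM.mem_nhds ht)).hasDerivAt

variable {G : α → ℝ → ℝ}

lemma aestronglyMeasurable_iteratedDerivWithin (hM : IsOpen M)
    (hG : ∀ x, ContDiffOn ℝ ∞ (G x) M) (hmeas : ∀ t ∈ M, AEStronglyMeasurable (G · t) ν) :
    ∀ k, ∀ t ∈ M, AEStronglyMeasurable (fun x => iteratedDerivWithin k (G x) M t) ν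
  | 0, t, ht => by simpa using hmeas t ht
  | k + 1, t, ht =>
    aestronglyMeasurable_of_hasDerivAt
      (eventually_of_mem (hM.mem_nhds ht)
        (aestronglyMeasurable_iteratedDerivWithin hM hG hmeas k))
      fun x => hasDerivAt_iteratedDerivWithin hM (hG x) k ht

lemma integrable_iteratedDerivWithin (hM : IsOpen M)
    (hG : ∀ x, ContDiffOn ℝ ∞ (G x) M) (hmeas : ∀ t ∈ M, AEStronglyMeasurable (G · t) ν)
    {k : ℕ} {t : ℝ} (ht : t ∈ M)
    (hdom : ∃ b : α → ℝ, Integrable b ν ∧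
      ∀ᶠ s in 𝓝 t, ∀ x, |iteratedDerivWithin k (G x) M s| ≤ b x) :
    Integrable (fun x => iteratedDerivWithin k (G x) M t) ν := by
  obtain ⟨b, hb, hbound⟩ := hdom
  exact hb.mono' (aestronglyMeasurable_iteratedDerivWithin hM hG hmeas k t ht)
    (ae_of_all _ hbound.self_of_nhds)

theorem iteratedDerivWithin_integral (hM : IsOpen M)
    (hG : ∀ x, ContDiffOn ℝ ∞ (G x) M) (hmeas : ∀ t ∈ M, AEStronglyMeasurable (G · t) ν)
    (hdom : ∀ k, ∀ t ∈ M, ∃ b : α → ℝ, Integrable b ν ∧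
      ∀ᶠ s in 𝓝 t, ∀ x, |iteratedDerivWithin k (G x) M s| ≤ b x) :
    ∀ k, ∀ t ∈ M, iteratedDerivWithin k (fun m => ∫ x, G x m ∂ν) M t =
      ∫ x, iteratedDerivWithin k (G x) M t ∂ν
  | 0, t, _ => by simp
  | k + 1, t, ht => by
    obtain ⟨b, hb, hbound⟩ := hdom (k + 1) t ht
    have hderiv := hasDerivAt_integral_of_dominated_loc_of_deriv_le
      (F' := fun s x => iteratedDerivWithin (k + 1) (G x) M s)
      (inter_mem (hM.mem_nhds ht) hbound)
      (eventually_of_mem (hM.mem_nhds ht)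
        (aestronglyMeasurable_iteratedDerivWithin hM hG hmeas k))
      (integrable_iteratedDerivWithin hM hG hmeas ht (hdom k t ht))
      (aestronglyMeasurable_iteratedDerivWithin hM hG hmeas (k + 1) t ht)
      (ae_of_all _ fun x s hs => hs.2 x) hb
      (ae_of_all _ fun x s hs => hasDerivAt_iteratedDerivWithin hM (hG x) k hs.1)
    rw [iteratedDerivWithin_succ, derivWithin_of_isOpen hM ht, ← hderiv.2.deriv]
    exact EventuallyEq.deriv_eq (eventually_of_mem (hM.mem_nhds ht)
      (iteratedDerivWithin_integral hM hG hmeas hdom k))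

end ParametricIntegral

section ExpFamily

lemma abs_iteratedDerivWithin_exp_comp_le {ψ : ℝ → ℝ} (hM : UniqueDiffOn ℝ M)
    (hψ : ContDiffOn ℝ ∞ ψ M) {s : ℝ} (hs : s ∈ M) {k : ℕ} {D : ℝ}
    (hD : ∀ i, 1 ≤ i → i ≤ k → |iteratedDerivWithin i ψ M s| ≤ D ^ i) :
    |iteratedDerivWithin k (fun m => exp (ψ m)) M s| ≤ k ! * exp (ψ s) * D ^ k := by
  have hexp : ∀ i, ‖iteratedFDerivWithin ℝ i exp univ (ψ s)‖ = exp (ψ s) := fun i => by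
    rw [iteratedFDerivWithin_univ, norm_iteratedFDeriv_eq_norm_iteratedDeriv,
      iteratedDeriv_eq_iterate, Real.iter_deriv_exp, norm_of_nonneg (exp_pos _).le]
  have := norm_iteratedFDerivWithin_comp_le contDiff_exp.contDiffOn hψ
    (WithTop.coe_le_coe.2 le_top) uniqueDiffOn_univ hM (mapsTo_univ _ _) hs
    (fun i _ => (hexp i).le)
    (by simpa only [norm_iteratedFDerivWithin_eq_norm_iteratedDerivWithin, Real.norm_eq_abs]
      using hD)
  rwa [norm_iteratedFDerivWithin_eq_norm_iteratedDerivWithin] at this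

variable {θ κ : ℝ → ℝ}

lemma exists_abs_iteratedDerivWithin_expFamily_le (hM : IsOpen M) (hθ : ContDiffOn ℝ ∞ θ M)
    (hκ : ContDiffOn ℝ ∞ κ M) (k : ℕ) {t : ℝ} (ht : t ∈ M) :
    ∃ C, 0 ≤ C ∧ ∀ᶠ s in 𝓝 t, ∀ x,
      |iteratedDerivWithin k (fun m => exp (θ m * x - κ m)) M s| ≤
        C * (1 + |x|) ^ k * exp (θ s * x - κ s) := by
  set S : ℝ → ℝ := fun y => ∑ i ∈ Finset.range (k + 1),
    (|iteratedDerivWithin i θ M y| + |iteratedDerivWithin i κ M y|)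
  have hcont : ∀ {f : ℝ → ℝ}, ContDiffOn ℝ ∞ f M → ∀ i : ℕ,
      ContinuousAt (iteratedDerivWithin i f M) t := fun hf i =>
    (hf.continuousOn_iteratedDerivWithin (by exact_mod_cast le_top) hM.uniqueDiffOn).continuousAt
      (hM.mem_nhds ht)
  have hS : ContinuousAt S t :=
    tendsto_finsetSum _ fun i _ => (hcont hθ i).abs.add (hcont hκ i).abs
  have hS₀ : 0 ≤ S t := by positivity
  refine ⟨k ! * (S t + 1) ^ k, by positivity, ?_⟩
  filter_upwards [hM.mem_nhds ht, hS.eventually_lt continuousAt_const (lt_add_one (S t))]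
    with s hs hSs x
  have hB : 1 ≤ (S t + 1) * (1 + |x|) :=
    one_le_mul_of_one_le_of_one_le (by linarith) (by linarith [abs_nonneg x])
  have hD : ∀ i, 1 ≤ i → i ≤ k →
      |iteratedDerivWithin i (fun m => θ m * x - κ m) M s| ≤ ((S t + 1) * (1 + |x|)) ^ i := by
    intro i hi hik
    have hterm : |iteratedDerivWithin i θ M s| + |iteratedDerivWithin i κ M s| ≤ S s :=
      Finset.single_le_sum (f := fun i => |iteratedDerivWithin i θ M s| +
        |iteratedDerivWithin i κ M s|) (fun _ _ => by positivity) (Finset.mem_range.2 (by omega))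
    rw [show (fun m => θ m * x - κ m) = (fun m => θ m * x) - κ from rfl,
      iteratedDerivWithin_sub hs hM.uniqueDiffOn
        (((hθ.mul contDiffOn_const) s hs).of_le (by exact_mod_cast le_top))
        ((hκ s hs).of_le (by exact_mod_cast le_top)),
      iteratedDerivWithin_mul_const_field]
    refine le_trans ?_ (le_self_pow₀ hB (by omega))
    calc _ ≤ |iteratedDerivWithin i θ M s| * |x| + |iteratedDerivWithin i κ M s| := by
          rw [← abs_mul]; exact abs_sub _ _
      _ ≤ (S t + 1) * (1 + |x|) := by
          nlinarith [abs_nonneg x, abs_nonneg (iteratedDerivWithin i θ M s),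
            abs_nonneg (iteratedDerivWithin i κ M s)]
  calc _ ≤ k ! * exp (θ s * x - κ s) * ((S t + 1) * (1 + |x|)) ^ k :=
        abs_iteratedDerivWithin_exp_comp_le hM.uniqueDiffOn
          ((hθ.mul contDiffOn_const).sub hκ) hs hD
    _ = _ := by rw [mul_pow]; ring

lemma injOn_of_integral_mul_eq {ν : Measure ℝ}
    (hnorm : ∀ m ∈ M, ∫ x, exp (θ m * x - κ m) ∂ν = 1)
    (hmean : ∀ m ∈ M, ∫ x, x * exp (θ m * x - κ m) ∂ν = m) : InjOn θ M := by
  intro a ha b hb hab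
  have hscale : ∀ x, exp (θ a * x - κ a) = exp (κ b - κ a) * exp (θ b * x - κ b) := fun x => by
    rw [← exp_add, hab]; ring_nf
  have hc : exp (κ b - κ a) = 1 := by
    simpa [hscale, integral_const_mul, hnorm b hb] using hnorm a ha
  calc a = ∫ x, x * exp (θ a * x - κ a) ∂ν := (hmean a ha).symm
    _ = ∫ x, x * exp (θ b * x - κ b) ∂ν := by simp_rw [hscale, hc, one_mul]
    _ = b := hmean b hb

lemma exists_lt_lt_of_injOn (hM : IsOpen M) (hθ : ContinuousOn θ M) (hinj : InjOn θ M)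
    {t : ℝ} (ht : t ∈ M) : ∃ a ∈ M, ∃ b ∈ M, θ a < θ t ∧ θ t < θ b := by
  obtain ⟨ε, hε, hball⟩ := Metric.isOpen_iff.1 hM t ht
  have hIcc : Icc (t - ε / 2) (t + ε / 2) ⊆ M := by
    rw [← Real.closedBall_eq_Icc]
    exact (Metric.closedBall_subset_ball (half_lt_self hε)).trans hball
  have hl : t - ε / 2 ∈ Icc (t - ε / 2) (t + ε / 2) := ⟨le_rfl, by linarith⟩
  have hm : t ∈ Icc (t - ε / 2) (t + ε / 2) := ⟨by linarith, by linarith⟩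
  have hr : t + ε / 2 ∈ Icc (t - ε / 2) (t + ε / 2) := ⟨by linarith, le_rfl⟩
  rcases (hθ.mono hIcc).strictMonoOn_of_injOn_Icc' (by linarith) (hinj.mono hIcc) with h | h
  · exact ⟨_, hIcc hl, _, hIcc hr, h hl hm (by linarith), h hm hr (by linarith)⟩
  · exact ⟨_, hIcc hr, _, hIcc hl, h hm hr (by linarith), h hl hm (by linarith)⟩

lemma exists_integrable_bound_expFamily {ν : Measure ℝ} (hM : IsOpen M)
    (hθ : ContinuousOn θ M) (hκ : ContinuousOn κ M) (hinj : InjOn θ M)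
    (hint : ∀ m ∈ M, Integrable (fun x => exp (θ m * x - κ m)) ν) (N : ℕ) {t : ℝ} (ht : t ∈ M) :
    ∃ b : ℝ → ℝ, Integrable b ν ∧
      ∀ᶠ s in 𝓝 t, ∀ x, (1 + |x|) ^ N * exp (θ s * x - κ s) ≤ b x := by
  obtain ⟨a, ha, c, hc, hat, htc⟩ := exists_lt_lt_of_injOn hM hθ hinj ht
  obtain ⟨δ, hδ, hδa, hδc⟩ : ∃ δ > 0, θ a + 2 * δ ≤ θ t ∧ θ t + 2 * δ ≤ θ c :=
    ⟨min (θ t - θ a) (θ c - θ t) / 2, half_pos (lt_min (sub_pos.2 hat) (sub_pos.2 htc)),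
      by linarith [min_le_left (θ t - θ a) (θ c - θ t)],
      by linarith [min_le_right (θ t - θ a) (θ c - θ t)]⟩
  have hexp : ∀ m ∈ M, Integrable (fun x => exp (θ m * x)) ν := fun m hm => by
    simpa [← exp_add] using (hint m hm).const_mul (exp (κ m))
  refine ⟨fun x => N ! / δ ^ N * (exp δ * exp (1 - κ t) * (exp (θ a * x) + exp (θ c * x))),
    ((hexp a ha).add (hexp c hc)).const_mul _ |>.const_mul _, ?_⟩
  have hθt := hθ.continuousAt (hM.mem_nhds ht)
  filter_upwards [hθt.eventually_lt continuousAt_const (lt_add_of_pos_right (θ t) hδ),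
    continuousAt_const.eventually_lt hθt (sub_lt_self (θ t) hδ),
    continuousAt_const.eventually_lt (hκ.continuousAt (hM.mem_nhds ht)) (sub_one_lt (κ t))]
    with s hs₁ hs₂ hs₃ x
  calc (1 + |x|) ^ N * exp (θ s * x - κ s)
      ≤ N ! / δ ^ N * exp (δ * (1 + |x|)) * exp (θ s * x - κ s) :=
        mul_le_mul_of_nonneg_right (pow_le_factorial_div_pow_mul_exp N hδ (by positivity))
          (exp_pos _).le
    _ = N ! / δ ^ N * (exp δ * exp (-κ s) * exp (δ * |x| + θ s * x)) := by
        rw [mul_assoc, ← exp_add, ← exp_add, ← exp_add]; ring_nf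
    _ ≤ N ! / δ ^ N * (exp δ * exp (1 - κ t) * (exp (θ a * x) + exp (θ c * x))) := by
        gcongr
        · linarith
        · exact exp_mul_abs_add_mul_le (by linarith) (by linarith) x

theorem integral_pow_mul_iteratedDerivWithin_expFamily {ν : Measure ℝ} (hM : IsOpen M)
    (hθ : ContDiffOn ℝ ∞ θ M) (hκ : ContDiffOn ℝ ∞ κ M) (hinj : InjOn θ M)
    (hint : ∀ m ∈ M, Integrable (fun x => exp (θ m * x - κ m)) ν) (p k : ℕ) {t : ℝ}
    (ht : t ∈ M) :
    Integrable (fun x => x ^ p * iteratedDerivWithin k (fun m => exp (θ m * x - κ m)) M t) ν ∧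
      ∫ x, x ^ p * iteratedDerivWithin k (fun m => exp (θ m * x - κ m)) M t ∂ν =
        iteratedDerivWithin k (fun m => ∫ x, x ^ p * exp (θ m * x - κ m) ∂ν) M t := by
  set G : ℝ → ℝ → ℝ := fun x m => x ^ p * exp (θ m * x - κ m)
  have hGk : ∀ k x s, iteratedDerivWithin k (G x) M s =
      x ^ p * iteratedDerivWithin k (fun m => exp (θ m * x - κ m)) M s := fun _ _ _ =>
    iteratedDerivWithin_const_mul_field _ _
  have hG : ∀ x, ContDiffOn ℝ ∞ (G x) M := fun x =>
    contDiffOn_const.mul ((hθ.mul contDiffOn_const).sub hκ).exp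
  have hmeas : ∀ m ∈ M, AEStronglyMeasurable (G · m) ν := fun m _ =>
    (by fun_prop : Continuous (G · m)).aestronglyMeasurable
  have hdom : ∀ k, ∀ s ∈ M, ∃ b : ℝ → ℝ, Integrable b ν ∧
      ∀ᶠ s' in 𝓝 s, ∀ x, |iteratedDerivWithin k (G x) M s'| ≤ b x := by
    intro k s hs
    obtain ⟨C, hC₀, hC⟩ := exists_abs_iteratedDerivWithin_expFamily_le hM hθ hκ k hs
    obtain ⟨b, hb, hbound⟩ := exists_integrable_bound_expFamily hM hθ.continuousOn
      hκ.continuousOn hinj hint (p + k) hs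
    refine ⟨fun x => C * b x, hb.const_mul C, ?_⟩
    filter_upwards [hC, hbound] with s' hC' hb' x
    rw [hGk, abs_mul, abs_pow]
    calc _ ≤ (1 + |x|) ^ p * (C * (1 + |x|) ^ k * exp (θ s' * x - κ s')) :=
          mul_le_mul (pow_le_pow_left₀ (abs_nonneg x) (by linarith) p) (hC' x) (abs_nonneg _)
            (by positivity)
      _ = C * ((1 + |x|) ^ (p + k) * exp (θ s' * x - κ s')) := by ring
      _ ≤ C * b x := mul_le_mul_of_nonneg_left (hb' x) hC₀
  refine ⟨by simpa only [hGk] using integrable_iteratedDerivWithin hM hG hmeas ht (hdom k t ht),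
    ?_⟩
  rw [iteratedDerivWithin_integral hM hG hmeas hdom k t ht]
  simp only [hGk]

theorem integral_affine_mul_iteratedDerivWithin_expFamily {ν : Measure ℝ} (hM : IsOpen M)
    (hθ : ContDiffOn ℝ ∞ θ M) (hκ : ContDiffOn ℝ ∞ κ M)
    (hnorm : ∀ m ∈ M, ∫ x, exp (θ m * x - κ m) ∂ν = 1)
    (hmean : ∀ m ∈ M, ∫ x, x * exp (θ m * x - κ m) ∂ν = m) {i : ℕ} (hi : 2 ≤ i) {t : ℝ}
    (ht : t ∈ M) (a b : ℝ) :
    ∫ x, (a * x - b) * iteratedDerivWithin i (fun m => exp (θ m * x - κ m)) M t ∂ν = 0 := by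
  have hint : ∀ m ∈ M, Integrable (fun x => exp (θ m * x - κ m)) ν := fun m hm =>
    .of_integral_ne_zero (by simp [hnorm m hm])
  have moment := integral_pow_mul_iteratedDerivWithin_expFamily hM hθ hκ
    (injOn_of_integral_mul_eq hnorm hmean) hint (k := i) (ht := ht)
  set D := fun x => iteratedDerivWithin i (fun m => exp (θ m * x - κ m)) M t
  have hD₀ : Integrable D ν := by simpa using (moment 0).1
  have hD₁ : Integrable (fun x => x * D x) ν := by simpa using (moment 1).1
  have h₀ : ∫ x, D x ∂ν = 0 := by
    have := (moment 0).2
    rw [iteratedDerivWithin_congr (g := fun _ => 1) (fun m hm => by simpa using hnorm m hm) ht,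
      iteratedDerivWithin_const] at this
    simpa [show i ≠ 0 by omega] using this
  have h₁ : ∫ x, x * D x ∂ν = 0 := by
    have := (moment 1).2
    rw [iteratedDerivWithin_congr (g := fun m => m) (fun m hm => by simpa using hmean m hm) ht,
      iteratedDerivWithin_fun_id ht hM.uniqueDiffOn] at this
    simpa [show i ≠ 0 by omega, show i ≠ 1 by omega] using this
  simp_rw [sub_mul, mul_assoc]
  rw [integral_sub (hD₁.const_mul a) (hD₀.const_mul b), integral_const_mul, integral_const_mul,
    h₀, h₁, mul_zero, mul_zero, sub_zero]

end ExpFamily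

lemma deriv_log_add_mul_zero {a : ℝ} (ha : a ≠ 0) (b : ℝ) :
    deriv (fun t => log (a + t * b)) 0 = b / a := by
  have h : HasDerivAt (fun t => a + t * b) b 0 := by
    simpa using ((hasDerivAt_id (0 : ℝ)).mul_const b).const_add a
  simpa using (h.log (by simpa using ha)).deriv

section LocalMixture

variable {f : ℝ → ℝ → ℝ} {g : ℝ → ℝ → (ℕ → ℝ) → ℝ} {r : ℕ}

lemma localMixture_zero
    (hg : ∀ x m l, g x m l = f x m
      + ∑ i ∈ Finset.Icc 2 r, l i * iteratedDerivWithin i (fun u => f x u) M m) (x m : ℝ) :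
    g x m (fun _ => 0) = f x m := by
  simp [hg]

lemma localMixture_single
    (hg : ∀ x m l, g x m l = f x m
      + ∑ i ∈ Finset.Icc 2 r, l i * iteratedDerivWithin i (fun u => f x u) M m)
    {i : ℕ} (hi : i ∈ Finset.Icc 2 r) (x m t : ℝ) :
    g x m (fun j => if j = i then t else 0) =
      f x m + t * iteratedDerivWithin i (fun u => f x u) M m := by
  rw [hg, Finset.sum_eq_single_of_mem i hi fun j _ hj => by simp [hj]]
  simp

lemma derivWithin_log_mul_deriv_log_localMixture_expFamily {θ κ : ℝ → ℝ} {μ : ℝ}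
    (hθ : DifferentiableWithinAt ℝ θ M μ) (hκ : DifferentiableWithinAt ℝ κ M μ)
    (hg : ∀ x m l, g x m l = exp (θ m * x - κ m)
      + ∑ i ∈ Finset.Icc 2 r, l i * iteratedDerivWithin i (fun u => exp (θ u * x - κ u)) M m)
    {i : ℕ} (hi : i ∈ Finset.Icc 2 r) (x : ℝ) :
    derivWithin (fun m => log (g x m fun _ => 0)) M μ
        * deriv (fun t => log (g x μ fun j => if j = i then t else 0)) 0 * exp (θ μ * x - κ μ) =
      (derivWithin θ M μ * x - derivWithin κ M μ)
        * iteratedDerivWithin i (fun m => exp (θ m * x - κ m)) M μ := by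
  simp only [localMixture_zero hg, localMixture_single hg hi, log_exp]
  rw [deriv_log_add_mul_zero (exp_pos _).ne', derivWithin_fun_sub (hθ.mul_const x) hκ,
    derivWithin_mul_const hθ, mul_assoc, div_mul_cancel₀ _ (exp_pos _).ne']

end LocalMixture

end

theorem local_mixture_parameter_orthogonality_general
    (ν : Measure ℝ) (θ κ : ℝ → ℝ) (f : ℝ → ℝ → ℝ)
    (M : Set ℝ) (hM : IsOpen M)
    (hf : ∀ x m, f x m = Real.exp (θ m * x - κ m))
    (hθ : ContDiffOn ℝ ⊤ θ M) (hκ : ContDiffOn ℝ ⊤ κ M)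
    (hnorm : ∀ m ∈ M, ∫ x, f x m ∂ν = 1)
    (hmean : ∀ m ∈ M, ∫ x, x * f x m ∂ν = m)
    (r : ℕ) (g : ℝ → ℝ → (ℕ → ℝ) → ℝ)
    (hg : ∀ x m l, g x m l = f x m
        + ∑ i ∈ Finset.Icc 2 r, l i * iteratedDerivWithin i (fun u => f x u) M m) :
    ∀ μ ∈ M, ∀ i ∈ Finset.Icc 2 r,
      ∫ x, derivWithin (fun m => Real.log (g x m (fun _ => 0))) M μ
          * deriv (fun t => Real.log (g x μ (fun j => if j = i then t else 0))) 0
          * f x μ ∂ν = 0 := by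
  intro μ hμ i hi
  simp only [hf] at hnorm hmean hg ⊢
  simp_rw [derivWithin_log_mul_deriv_log_localMixture_expFamily
    ((hθ.differentiableOn (by simp)) μ hμ) ((hκ.differentiableOn (by simp)) μ hμ) hg hi]
  exact integral_affine_mul_iteratedDerivWithin_expFamily hM (hθ.of_le le_top) (hκ.of_le le_top)
    hnorm hmean (Finset.mem_Icc.1 hi).1 hμ _ _

/-- Parameter orthogonality at `λ = 0`: for a natural exponential family with quadratic
variance function, the `μ`-score and each `λᵢ`-score of the local mixture model
`g(x;μ,λ) = f(x;μ) + ∑ᵢ₌₂ʳ λᵢ f⁽ⁱ⁾(x;μ)` are orthogonal at `λ = 0`. -/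
theorem local_mixture_parameter_orthogonality
    (ν : Measure ℝ) (θ κ : ℝ → ℝ) (f : ℝ → ℝ → ℝ)
    (M : Set ℝ) (hM : IsOpen M)
    (hf : ∀ x m, f x m = Real.exp (θ m * x - κ m))
    (hθ : ContDiffOn ℝ ⊤ θ M) (hκ : ContDiffOn ℝ ⊤ κ M)
    (hnorm : ∀ m ∈ M, ∫ x, f x m ∂ν = 1)
    (hmean : ∀ m ∈ M, ∫ x, x * f x m ∂ν = m)
    (V : ℝ → ℝ)
    (hV : ∀ m ∈ M, V m = ∫ x, (x - m)^2 * f x m ∂ν)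
    (hquad : ∃ a b c : ℝ, ∀ m ∈ M, V m = a * m^2 + b * m + c)
    (r : ℕ) (g : ℝ → ℝ → (ℕ → ℝ) → ℝ)
    (hg : ∀ x m l, g x m l = f x m
        + ∑ i ∈ Finset.Icc 2 r, l i * iteratedDerivWithin i (fun u => f x u) M m) :
    ∀ μ ∈ M, ∀ i ∈ Finset.Icc 2 r,
      ∫ x, derivWithin (fun m => Real.log (g x m (fun _ => 0))) M μ
          * deriv (fun t => Real.log (g x μ (fun j => if j = i then t else 0))) 0
          * f x μ ∂ν = 0 :=
  local_mixture_parameter_orthogonality_general ν θ κ f M hM hf hθ hκ hnorm hmean r g hg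
end

section
/- For the binomial family f(x;μ) = C(n,x) (μ/n)ˣ (1-μ/n)^{n-x} with mean parameter μ ∈ (0,n), the k-th derivative with respect to μ satisfies f⁽ᵏ⁾(x;μ) = f(x;μ)·pₖ(x;μ) where pₖ is a polynomial of exact degree k in x; consequently ∫ xⁱ f⁽ᵏ⁾(x;μ) dν(x) = 0 for all integers 0 ≤ i < k. -/
/-!
Write `f(x;μ) = C(n,x) n⁻ⁿ μˣ (n-μ)ⁿ⁻ˣ`. Leibniz's rule gives
`f⁽ᵏ⁾(x;μ) = f(x;μ) ∑ⱼ C(k,j) (x)ⱼ μ⁻ʲ (-1)ᵏ⁻ʲ (n-x)ₖ₋ⱼ (n-μ)⁻⁽ᵏ⁻ʲ⁾` with falling factorials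
`(y)ⱼ`; as a polynomial in `x` this is a combination of monic polynomials of degree `k` whose
weights sum to `(μ⁻¹ + (n-μ)⁻¹)ᵏ > 0`, so it has exact degree `k`.

For orthogonality, `∑ₓ xⁱ f⁽ᵏ⁾(x;μ)` is the `k`-th derivative of the moment `Mᵢ(μ) = ∑ₓ xⁱ f(x;μ)`.
The identity `x f = μ(n-μ)/n · ∂_μ f + μ f` gives `Mᵢ₊₁ = μ(n-μ)/n · Mᵢ' + μ Mᵢ` and `M₀ = 1`,
so `Mᵢ` is a polynomial of degree at most `i < k` in `μ`.
-/

open Polynomial Finset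

namespace Polynomial

theorem iteratedDeriv_eval_s19 {𝕜 : Type*} [NontriviallyNormedField 𝕜] (p : 𝕜[X]) (k : ℕ) :
    iteratedDeriv k (fun x => p.eval x) = fun x => (derivative^[k] p).eval x := by
  induction k generalizing p with
  | zero => rfl
  | succ k ih =>
    rw [iteratedDeriv_succ', Function.iterate_succ_apply, ← ih]
    congr 1
    funext x
    exact p.deriv

theorem degree_sum_C_mul_monic {R ι : Type*} [Semiring R] {s : Finset ι} {c : ι → R}
    {q : ι → R[X]} {k : ℕ} (hq : ∀ i ∈ s, (q i).Monic) (hdeg : ∀ i ∈ s, (q i).natDegree = k)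
    (hc : ∑ i ∈ s, c i ≠ 0) : (∑ i ∈ s, C (c i) * q i).degree = k := by
  refine degree_eq_of_le_of_coeff_ne_zero (degree_le_of_natDegree_le ?_) ?_
  · exact natDegree_sum_le_of_forall_le _ _ fun i hi =>
      (natDegree_C_mul_le _ _).trans (hdeg i hi).le
  · rwa [finsetSum_coeff, sum_congr rfl fun i hi => by
      rw [coeff_C_mul, ← hdeg i hi, (hq i hi).coeff_natDegree, mul_one]]

theorem X_mul_C_sub_X_mul_derivative {R : Type*} [CommRing R] (c : R) (a b : ℕ) :
    X * (C c - X) * derivative (X ^ a * (C c - X) ^ b) =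
      (C (a : R) * (C c - X) - C (b : R) * X) * (X ^ a * (C c - X) ^ b) := by
  simp only [derivative_mul, derivative_pow, derivative_sub, derivative_C, derivative_X]
  cases a <;> cases b <;> simp [pow_succ] <;> ring

theorem natDegree_X_mul_C_sub_X_mul_derivative_le {R : Type*} [CommRing R] (c : R) (p : R[X]) :
    (X * (C c - X) * derivative p).natDegree ≤ p.natDegree + 1 := by
  rcases Nat.eq_zero_or_pos p.natDegree with h | h
  · simp [derivative_of_natDegree_zero h]
  · have hquad : (X * (C c - X)).natDegree ≤ 2 := natDegree_mul_le_of_le natDegree_X_le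
      (natDegree_sub_le_of_le (natDegree_C c).le natDegree_X_le)
    exact (natDegree_mul_le_of_le hquad (natDegree_derivative_le p)).trans (by omega)

end Polynomial

theorem descFactorial_mul_pow_sub {𝕜 : Type*} [Field 𝕜] {x : 𝕜} (hx : x ≠ 0) (a j : ℕ) :
    (a.descFactorial j : 𝕜) * x ^ (a - j) = x ^ a * (a.descFactorial j / x ^ j) := by
  rcases le_or_gt j a with h | h
  · rw [pow_sub₀ x hx h]; ring
  · simp [Nat.descFactorial_eq_zero_iff_lt.mpr h]

theorem iteratedDeriv_pow_mul_const_sub_pow {𝕜 : Type*} [NontriviallyNormedField 𝕜]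
    (a b k : ℕ) (c x : 𝕜) :
    iteratedDeriv k (fun m => m ^ a * (c - m) ^ b) x = ∑ j ∈ range (k + 1), k.choose j *
      (a.descFactorial j * x ^ (a - j)) *
      ((-1) ^ (k - j) * (b.descFactorial (k - j) * (c - x) ^ (b - (k - j)))) := by
  rw [iteratedDeriv_fun_mul (by fun_prop) (by fun_prop)]
  refine sum_congr rfl fun j _ => ?_
  rw [iteratedDeriv_comp_const_sub (k - j) (· ^ b) c]
  simp

/-- `(ascPochhammer ℝ (k - j)).eval (x - n) = (-1)^(k-j) (n-x)(n-x-1)⋯`, the factor produced by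
differentiating `(n - μ)^(n-x)` `k - j` times. -/
noncomputable def krawtchouk (n : ℕ) (μ : ℝ) (k : ℕ) : ℝ[X] :=
  ∑ j ∈ range (k + 1), C (k.choose j / (μ ^ j * (n - μ) ^ (k - j))) *
    (descPochhammer ℝ j * (ascPochhammer ℝ (k - j)).comp (X - C (n : ℝ)))

theorem degree_krawtchouk {n : ℕ} {μ : ℝ} (hμ : 0 < μ) (hμn : 0 < n - μ) (k : ℕ) :
    (krawtchouk n μ k).degree = k := by
  refine degree_sum_C_mul_monic (fun j _ => ?_) (fun j hj => ?_) ?_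
  · exact (monic_descPochhammer ℝ j).mul ((monic_ascPochhammer ℝ _).comp_X_sub_C _)
  · rw [(monic_descPochhammer ℝ j).natDegree_mul ((monic_ascPochhammer ℝ _).comp_X_sub_C _),
      natDegree_comp, natDegree_X_sub_C, descPochhammer_natDegree, ascPochhammer_natDegree]
    have := mem_range.1 hj
    omega
  · have hsum : ∑ j ∈ range (k + 1), (k.choose j / (μ ^ j * (n - μ) ^ (k - j)) : ℝ) =
        (μ⁻¹ + (n - μ)⁻¹) ^ k := by
      rw [add_pow]
      refine sum_congr rfl fun j _ => ?_
      rw [inv_pow, inv_pow, div_eq_mul_inv, mul_inv]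
      ring
    rw [hsum]
    positivity

theorem krawtchouk_eval {n x : ℕ} (hx : x ≤ n) (μ : ℝ) (k : ℕ) :
    (krawtchouk n μ k).eval (x : ℝ) = ∑ j ∈ range (k + 1),
      k.choose j / (μ ^ j * (n - μ) ^ (k - j)) *
        (x.descFactorial j * ((-1) ^ (k - j) * (n - x).descFactorial (k - j))) := by
  simp only [krawtchouk, eval_finsetSum, eval_mul, eval_C, eval_comp, eval_sub, eval_X,
    descPochhammer_eval_eq_descFactorial]
  refine sum_congr rfl fun j _ => ?_
  rw [show (x : ℝ) - n = -((n - x : ℕ) : ℝ) by push_cast [hx]; ring,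
    ascPochhammer_eval_neg_eq_descPochhammer, descPochhammer_eval_eq_descFactorial]

theorem iteratedDeriv_pow_mul_sub_pow {n x : ℕ} (hx : x ≤ n) {μ : ℝ} (hμ : μ ≠ 0)
    (hμn : (n : ℝ) - μ ≠ 0) (k : ℕ) :
    iteratedDeriv k (fun m => m ^ x * ((n : ℝ) - m) ^ (n - x)) μ =
      μ ^ x * (n - μ) ^ (n - x) * (krawtchouk n μ k).eval (x : ℝ) := by
  rw [iteratedDeriv_pow_mul_const_sub_pow, krawtchouk_eval hx, mul_sum]
  refine sum_congr rfl fun j _ => ?_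
  rw [descFactorial_mul_pow_sub hμ, descFactorial_mul_pow_sub hμn]
  field_simp

noncomputable def binomialPMFPoly (n x : ℕ) : ℝ[X] :=
  C ((n.choose x : ℝ) / (n : ℝ) ^ n) * (X ^ x * (C (n : ℝ) - X) ^ (n - x))

theorem binomialPMFPoly_eval {n x : ℕ} (hn : (n : ℝ) ≠ 0) (hx : x ≤ n) (m : ℝ) :
    (binomialPMFPoly n x).eval m = n.choose x * (m / n) ^ x * (1 - m / n) ^ (n - x) := by
  have hpow : (n : ℝ) ^ n = n ^ x * n ^ (n - x) := by rw [← pow_add, Nat.add_sub_cancel' hx]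
  simp only [binomialPMFPoly, eval_mul, eval_C, eval_pow, eval_X, eval_sub]
  rw [one_sub_div hn, div_pow, div_pow, hpow]
  field_simp

theorem iteratedDeriv_binomialPMFPoly_eval {n x : ℕ} (hx : x ≤ n) {μ : ℝ} (hμ : μ ≠ 0)
    (hμn : (n : ℝ) - μ ≠ 0) (k : ℕ) :
    iteratedDeriv k (fun m => (binomialPMFPoly n x).eval m) μ =
      (binomialPMFPoly n x).eval μ * (krawtchouk n μ k).eval (x : ℝ) := by
  simp only [binomialPMFPoly, eval_mul, eval_C, eval_pow, eval_X, eval_sub]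
  rw [iteratedDeriv_const_mul_field, iteratedDeriv_pow_mul_sub_pow hx hμ hμn]
  ring

noncomputable def binomialMoment (n i : ℕ) : ℝ[X] :=
  ∑ x ∈ range (n + 1), C ((x : ℝ) ^ i) * binomialPMFPoly n x

theorem binomialMoment_zero {n : ℕ} (hn : (n : ℝ) ≠ 0) : binomialMoment n 0 = 1 := by
  have h := add_pow (X : ℝ[X]) (C (n : ℝ) - X) n
  rw [add_sub_cancel, ← C_pow] at h
  calc binomialMoment n 0
      = C ((n : ℝ) ^ n)⁻¹ *
          ∑ x ∈ range (n + 1), X ^ x * (C (n : ℝ) - X) ^ (n - x) * ↑(n.choose x) := by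
        simp only [binomialMoment, binomialPMFPoly, pow_zero, C_1, one_mul, mul_sum]
        refine sum_congr rfl fun x _ => ?_
        rw [div_eq_inv_mul, C_mul, ← map_natCast C]
        ring
    _ = 1 := by rw [← h, ← C_mul, inv_mul_cancel₀ (pow_ne_zero _ hn), C_1]

theorem binomialMoment_succ {n : ℕ} (hn : (n : ℝ) ≠ 0) (i : ℕ) :
    binomialMoment n (i + 1) =
      C (n : ℝ)⁻¹ * (X * (C (n : ℝ) - X) * derivative (binomialMoment n i)) +
        X * binomialMoment n i := by
  simp only [binomialMoment, binomialPMFPoly, derivative_sum, derivative_C_mul, mul_sum,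
    ← sum_add_distrib]
  refine sum_congr rfl fun x hx => ?_
  have hC : C (n : ℝ)⁻¹ * C (n : ℝ) = 1 := by rw [← C_mul, inv_mul_cancel₀ hn, C_1]
  have key := X_mul_C_sub_X_mul_derivative (n : ℝ) x (n - x)
  rw [Nat.cast_sub (Nat.lt_succ_iff.mp (mem_range.mp hx)), map_sub] at key
  rw [pow_succ, C_mul]
  linear_combination (-(C (n : ℝ)⁻¹ * C ((x : ℝ) ^ i) * C ((n.choose x : ℝ) / (n : ℝ) ^ n))) * key -
    (C ((x : ℝ) ^ i) * C ((n.choose x : ℝ) / (n : ℝ) ^ n) * (X ^ x * (C (n : ℝ) - X) ^ (n - x)) *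
      (C (x : ℝ) - X)) * hC

theorem natDegree_binomialMoment_le {n : ℕ} (hn : (n : ℝ) ≠ 0) (i : ℕ) :
    (binomialMoment n i).natDegree ≤ i := by
  induction i with
  | zero => simp [binomialMoment_zero hn]
  | succ i ih =>
    rw [binomialMoment_succ hn]
    refine natDegree_add_le_of_degree_le ((natDegree_C_mul_le _ _).trans ?_) ?_
    · exact (natDegree_X_mul_C_sub_X_mul_derivative_le _ _).trans (by omega)
    · exact (natDegree_mul_le_of_le natDegree_X_le ih).trans (by omega)

theorem sum_pow_mul_iteratedDeriv_binomialPMFPoly_eval {n : ℕ} (hn : (n : ℝ) ≠ 0) {i k : ℕ}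
    (hik : i < k) (μ : ℝ) :
    ∑ x ∈ range (n + 1),
      (x : ℝ) ^ i * iteratedDeriv k (fun m => (binomialPMFPoly n x).eval m) μ = 0 := by
  have h := congrArg (eval μ) (iterate_derivative_eq_zero
    ((natDegree_binomialMoment_le hn i).trans_lt hik))
  simpa only [iteratedDeriv_eval_s19, binomialMoment, iterate_derivative_sum,
    iterate_derivative_C_mul, eval_finsetSum, eval_mul, eval_C, eval_zero] using h

theorem binomial_derivatives_orthogonal_polynomials_general
    (n : ℕ) (μ : ℝ) (hμ : μ ∈ Set.Ioo (0 : ℝ) n)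
    (f : ℕ → ℝ → ℝ)
    (hf : ∀ (x : ℕ) (m : ℝ),
      f x m = (n.choose x : ℝ) * (m / n)^x * (1 - m / n)^(n - x)) :
    ∀ k : ℕ, k ≤ n →
      (∃ p : Polynomial ℝ, p.degree = (k : ℕ) ∧
        ∀ x : ℕ, x ≤ n →
          iteratedDeriv k (fun m => f x m) μ = f x μ * p.eval (x : ℝ)) ∧
      (∀ i : ℕ, i < k →
        ∑ x ∈ Finset.range (n + 1),
          (x : ℝ)^i * iteratedDeriv k (fun m => f x m) μ = 0) := by
  obtain ⟨hμ0, hμn⟩ := hμ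
  have hn : (n : ℝ) ≠ 0 := (hμ0.trans hμn).ne'
  have hfP : ∀ x ≤ n, (fun m => f x m) = fun m => (binomialPMFPoly n x).eval m :=
    fun x hx => funext fun m => by rw [hf, binomialPMFPoly_eval hn hx]
  intro k _
  refine ⟨⟨krawtchouk n μ k, degree_krawtchouk hμ0 (sub_pos.2 hμn) k, fun x hx => ?_⟩,
    fun i hi => ?_⟩
  · rw [hfP x hx, iteratedDeriv_binomialPMFPoly_eval hx hμ0.ne' (sub_pos.2 hμn).ne',
      ← congrFun (hfP x hx) μ]
  · rw [← sum_pow_mul_iteratedDeriv_binomialPMFPoly_eval hn hi μ]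
    exact sum_congr rfl fun x hx => by rw [hfP x (Nat.lt_succ_iff.mp (mem_range.mp hx))]

/-- For the binomial family in mean parametrization,
`f(x;μ) = C(n,x)(μ/n)ˣ(1-μ/n)^{n-x}`, each derivative `f⁽ᵏ⁾(x;μ)` (for `k ≤ n`)
equals `f(x;μ)` times a polynomial in `x` of exact degree `k`; consequently
`∑ₓ xⁱ f⁽ᵏ⁾(x;μ) = 0` for all `0 ≤ i < k`. -/
theorem binomial_derivatives_orthogonal_polynomials
    (n : ℕ) (hn : 0 < n) (μ : ℝ) (hμ : μ ∈ Set.Ioo (0 : ℝ) n)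
    (f : ℕ → ℝ → ℝ)
    (hf : ∀ (x : ℕ) (m : ℝ),
      f x m = (n.choose x : ℝ) * (m / n)^x * (1 - m / n)^(n - x)) :
    ∀ k : ℕ, k ≤ n →
      (∃ p : Polynomial ℝ, p.degree = (k : ℕ) ∧
        ∀ x : ℕ, x ≤ n →
          iteratedDeriv k (fun m => f x m) μ = f x μ * p.eval (x : ℝ)) ∧
      (∀ i : ℕ, i < k →
        ∑ x ∈ Finset.range (n + 1),
          (x : ℝ)^i * iteratedDeriv k (fun m => f x m) μ = 0) :=
  binomial_derivatives_orthogonal_polynomials_general n μ hμ f hf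
end
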